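/- arXiv:2208.03739 — 3 statements merged into one kernel-verified Lean document; each statement's English description precedes it below -/
import Mathlib

section
/- Let X be a metric space (or, more generally, a T1 topological space), let E ⊆ X be an open connected set and let x ∈ E. Assume there exists an open set U with x ∈ U ⊆ E such that U \ {x} is nonempty and connected. Then E \ {x} is connected. -/
open Classical in

private lemma aux0 {X : Type*} [TopologicalSpace X] [T1Space X]
    (E U : Set X) (x : X)
    (hEopen : IsOpen E) (hEconn : IsConnected E) (hxE : x ∈ E)
    (hUopen : IsOpen U) (hxU : x ∈ U) (hUE : U ⊆ E)
    (hne : (E \ {x}).Nonempty)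
    (u v : Set X) (huo : IsOpen u) (hvo : IsOpen v)
    (hcov : E \ {x} ⊆ u ∪ v)
    (hsub : U \ {x} ⊆ u)
    (hv : ((E \ {x}) ∩ v).Nonempty) :
    ((E \ {x}) ∩ (u ∩ v)).Nonempty := by
  -- {x} is not open, since otherwise {x} and E \ {x} would disconnect E
  have hnotopen : ¬ IsOpen ({x} : Set X) := by
    intro hop
    obtain ⟨y, hyE, hy1, hy2⟩ := hEconn.isPreconnected {x} (E \ {x}) hop
      (hEopen.sdiff isClosed_singleton)
      (fun y hy => if h : y = x then Or.inl h else Or.inr ⟨hy, h⟩)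
      ⟨x, hxE, rfl⟩ (hne.imp fun y hy => ⟨hy.1, hy⟩)
    exact hy2.2 hy1
  -- apply connectedness of E to (u ∪ U) and v
  obtain ⟨y, hyE, hy1, hy2⟩ := hEconn.isPreconnected (u ∪ U) v
    (huo.union hUopen) hvo
    (fun y hy => if h : y = x then Or.inl (Or.inr (h ▸ hxU)) else
      ((hcov ⟨hy, h⟩).elim (fun h' => Or.inl (Or.inl h')) Or.inr))
    ⟨x, hxE, Or.inr hxU⟩
    (hv.imp (fun y hy => ⟨hy.1.1, hy.2⟩))
  by_cases h : y = x
  · -- then x ∈ v; since {x} is not open, (U ∩ v) \ {x} is nonempty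
    subst h
    have hUv : ((U ∩ v) \ {y}).Nonempty := by
      by_contra hc
      rw [Set.not_nonempty_iff_eq_empty, Set.diff_eq_empty] at hc
      have : U ∩ v = {y} :=
        Set.Subset.antisymm hc (Set.singleton_subset_iff.mpr ⟨hxU, hy2⟩)
      exact hnotopen (this ▸ (hUopen.inter hvo))
    obtain ⟨z, ⟨hzU, hzv⟩, hzx⟩ := hUv
    exact ⟨z, ⟨hUE hzU, hzx⟩, hsub ⟨hzU, hzx⟩, hzv⟩
  · rcases hy1 with h' | h'
    · exact ⟨y, ⟨hyE, h⟩, h', hy2⟩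
    · exact ⟨y, ⟨hyE, h⟩, hsub ⟨h', h⟩, hy2⟩

/-- If `E` is an open connected set in a T1 space, `x ∈ E`, and there is an open
set `U` with `x ∈ U ⊆ E` such that `U \ {x}` is nonempty and connected, then
`E \ {x}` is connected. -/
theorem stmt0 {X : Type*} [TopologicalSpace X] [T1Space X]
    (E U : Set X) (x : X)
    (hEopen : IsOpen E) (hEconn : IsConnected E) (hxE : x ∈ E)
    (hUopen : IsOpen U) (hxU : x ∈ U) (hUE : U ⊆ E)
    (hU : IsConnected (U \ {x})) :
    IsConnected (E \ {x}) := by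
  have hsubE : U \ {x} ⊆ E \ {x} := fun y hy => ⟨hUE hy.1, hy.2⟩
  have hne : (E \ {x}).Nonempty := hU.nonempty.mono hsubE
  refine ⟨hne, fun u v huo hvo hcov hu hv => ?_⟩
  by_cases hc : ((U \ {x}) ∩ u).Nonempty
  · by_cases hc' : ((U \ {x}) ∩ v).Nonempty
    · obtain ⟨z, hz⟩ := hU.isPreconnected u v huo hvo
        (fun y hy => hcov (hsubE hy)) hc hc'
      exact ⟨z, hsubE hz.1, hz.2⟩
    · have hsub : U \ {x} ⊆ u := fun y hy =>
        (hcov (hsubE hy)).elim id (fun h => absurd ⟨y, hy, h⟩ hc')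
      exact aux0 E U x hEopen hEconn hxE hUopen hxU hUE hne u v huo hvo hcov hsub hv
  · have hsub : U \ {x} ⊆ v := fun y hy =>
      (hcov (hsubE hy)).elim (fun h => absurd ⟨y, hy, h⟩ hc) id
    obtain ⟨z, hz1, hz2, hz3⟩ :=
      aux0 E U x hEopen hEconn hxE hUopen hxU hUE hne v u hvo huo
        (fun y hy => (hcov hy).symm) hsub hu
    exact ⟨z, hz1, hz3, hz2⟩
end

section
/- Let N ≥ 1 be a real number, K ≥ 0, and 0 < R ≤ ∞. Let f : (0,R) → [0,∞) be measurable and integrable on (0,r) for every r < R, and set F(r) := ∫₀^r f(s) ds. Assume that F(r) > 0 for every r ∈ (0,R) and that f(r) ≥ K·F(r)^{(N−1)/N} for almost every r ∈ (0,R). Then F(r) ≥ (K·r/N)^N for every r ∈ (0,R). -/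
open MeasureTheory
open scoped ENNReal

/-!
Writing `p = (N - 1)/N`, the hypothesis says `F' ≥ K F^p` almost everywhere, i.e.
`(F^{1/N})' ≥ K/N`. Since `F` is only absolutely continuous, we compare it on `[ε, r]` with the
`C¹` lower solution `A t = F ε + ∫_ε^t K F^p`: then `0 < A ≤ F`, so `A' = K F^p ≥ K A^p`, and the
mean value theorem applied to `A^{1/N}` gives `K (r - ε)/N ≤ F(r)^{1/N}`. Let `ε → 0`.
-/

open Set Filter intervalIntegral

theorem mul_sub_le_rpow_sub_rpow_of_hasDerivAt {A A' : ℝ → ℝ} {K q a b : ℝ} (hq : 0 < q)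
    (hab : a ≤ b) (hA : ContinuousOn A (Icc a b)) (hpos : ∀ t ∈ Icc a b, 0 < A t)
    (hderiv : ∀ t ∈ Ioo a b, HasDerivAt A (A' t) t)
    (hle : ∀ t ∈ Ioo a b, K * A t ^ (1 - q) ≤ A' t) :
    K * q * (b - a) ≤ A b ^ q - A a ^ q := by
  have hderiv_rpow : ∀ t ∈ Ioo a b,
      HasDerivAt (fun s => A s ^ q) (A' t * q * A t ^ (q - 1)) t := fun t ht =>
    (hderiv t ht).rpow_const (Or.inl (hpos t (Ioo_subset_Icc_self ht)).ne')
  refine (convex_Icc a b).mul_sub_le_image_sub_of_le_deriv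
    (hA.rpow_const fun t ht => Or.inl (hpos t ht).ne') ?_ ?_ a (left_mem_Icc.2 hab) b
    (right_mem_Icc.2 hab) hab <;> rw [interior_Icc]
  · exact fun t ht => (hderiv_rpow t ht).differentiableAt.differentiableWithinAt
  · intro t ht
    have hAt := hpos t (Ioo_subset_Icc_self ht)
    have hcancel : A t ^ (1 - q) * A t ^ (q - 1) = 1 := by
      rw [← Real.rpow_add hAt]; norm_num
    rw [(hderiv_rpow t ht).deriv]
    calc K * q = K * A t ^ (1 - q) * q * A t ^ (q - 1) := by
          linear_combination (-(K * q)) * hcancel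
      _ ≤ A' t * q * A t ^ (q - 1) := by gcongr; exact hle t ht

theorem mul_sub_le_rpow_sub_rpow_of_add_integral_le {F : ℝ → ℝ} {K q a b : ℝ} (hK : 0 ≤ K)
    (hq0 : 0 < q) (hq1 : q ≤ 1) (hab : a ≤ b) (hF : ContinuousOn F (Icc a b))
    (hpos : ∀ t ∈ Icc a b, 0 < F t)
    (hineq : ∀ t ∈ Icc a b, F a + ∫ s in a..t, K * F s ^ (1 - q) ≤ F t) :
    K * q * (b - a) ≤ F b ^ q - F a ^ q := by
  set g : ℝ → ℝ := fun s => K * F s ^ (1 - q)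
  have hg : ContinuousOn g (Icc a b) :=
    continuousOn_const.mul (hF.rpow_const fun _ _ => Or.inr (by linarith))
  set A : ℝ → ℝ := fun t => F a + ∫ s in a..t, g s
  have hApos : ∀ t ∈ Icc a b, 0 < A t := fun t ht =>
    add_pos_of_pos_of_nonneg (hpos a (left_mem_Icc.2 hab)) <| integral_nonneg ht.1 fun s hs =>
      mul_nonneg hK (Real.rpow_nonneg (hpos s ⟨hs.1, hs.2.trans ht.2⟩).le _)
  have hAcont : ContinuousOn A (Icc a b) := by
    refine continuousOn_const.add ?_
    simpa [uIcc_of_le hab] using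
      continuousOn_primitive_interval' (hg.intervalIntegrable_of_Icc hab) left_mem_uIcc
  have hAderiv : ∀ t ∈ Ioo a b, HasDerivAt A (g t) t := fun t ht =>
    (integral_hasDerivAt_right
      ((hg.mono (Icc_subset_Icc le_rfl ht.2.le)).intervalIntegrable_of_Icc ht.1.le)
      ((hg.mono Ioo_subset_Icc_self).stronglyMeasurableAtFilter isOpen_Ioo t ht)
      (hg.continuousAt (Icc_mem_nhds ht.1 ht.2))).const_add (F a)
  have hA_le_F : ∀ t ∈ Icc a b, A t ≤ F t := hineq
  have hA_slope := mul_sub_le_rpow_sub_rpow_of_hasDerivAt hq0 hab hAcont hApos hAderiv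
    fun t ht => mul_le_mul_of_nonneg_left (Real.rpow_le_rpow (hApos t (Ioo_subset_Icc_self ht)).le
      (hA_le_F t (Ioo_subset_Icc_self ht)) (by linarith)) hK
  have hAa : A a = F a := by simp [A]
  have hAb : A b ^ q ≤ F b ^ q := Real.rpow_le_rpow (hApos b (right_mem_Icc.2 hab)).le
    (hA_le_F b (right_mem_Icc.2 hab)) hq0.le
  rw [hAa] at hA_slope
  linarith

theorem mul_sub_le_rpow_sub_rpow_of_ae_le {f F : ℝ → ℝ} {K q a b : ℝ} (hK : 0 ≤ K)
    (hq0 : 0 < q) (hq1 : q ≤ 1) (hab : a ≤ b) (hf : IntervalIntegrable f volume a b)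
    (hF : ∀ t ∈ Icc a b, F t = F a + ∫ s in a..t, f s) (hpos : ∀ t ∈ Icc a b, 0 < F t)
    (hae : ∀ᵐ s, s ∈ Icc a b → K * F s ^ (1 - q) ≤ f s) :
    K * q * (b - a) ≤ F b ^ q - F a ^ q := by
  have hFcont : ContinuousOn F (Icc a b) := by
    refine (continuousOn_const.add ?_).congr hF
    simpa [uIcc_of_le hab] using continuousOn_primitive_interval' hf left_mem_uIcc
  have hg : ContinuousOn (fun s => K * F s ^ (1 - q)) (Icc a b) :=
    continuousOn_const.mul (hFcont.rpow_const fun _ _ => Or.inr (by linarith))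
  refine mul_sub_le_rpow_sub_rpow_of_add_integral_le hK hq0 hq1 hab hFcont hpos fun t ht => ?_
  have hsub : Icc a t ⊆ Icc a b := Icc_subset_Icc le_rfl ht.2
  rw [hF t ht]
  gcongr
  refine integral_mono_ae_restrict ht.1 ((hg.mono hsub).intervalIntegrable_of_Icc ht.1)
    (hf.mono_set (by simpa [uIcc_of_le ht.1, uIcc_of_le hab] using hsub)) ?_
  filter_upwards [ae_restrict_of_ae hae, ae_restrict_mem measurableSet_Icc] with s hs hst
  exact hs (hsub hst)

theorem stmt5_general (N K : ℝ) (hN : 1 ≤ N) (hK : 0 ≤ K) (R : ℝ≥0∞)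
    (f F : ℝ → ℝ)
    (hint : ∀ r : ℝ, 0 < r → ENNReal.ofReal r < R → IntegrableOn f (Set.Ioc 0 r))
    (hF : ∀ r : ℝ, F r = ∫ s in (0:ℝ)..r, f s)
    (hFpos : ∀ r : ℝ, 0 < r → ENNReal.ofReal r < R → 0 < F r)
    (hae : ∀ᵐ r ∂(volume : Measure ℝ), 0 < r → ENNReal.ofReal r < R →
      K * F r ^ ((N - 1) / N) ≤ f r) :
    ∀ r : ℝ, 0 < r → ENNReal.ofReal r < R → (K * r / N) ^ N ≤ F r := by
  intro b hb hbR
  have hN0 : 0 < N := by linarith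
  have hexp : (N - 1) / N = 1 - N⁻¹ := by field_simp
  have hltR : ∀ {t}, t ≤ b → ENNReal.ofReal t < R := fun ht =>
    (ENNReal.ofReal_le_ofReal ht).trans_lt hbR
  have hfb : ∀ t ∈ Icc 0 b, IntervalIntegrable f volume 0 t := fun t ht =>
    (intervalIntegrable_iff_integrableOn_Ioc_of_le ht.1).2
      ((hint b hb hbR).mono_set (Ioc_subset_Ioc le_rfl ht.2))
  have hslope : ∀ ε ∈ Ioo 0 b, K * N⁻¹ * (b - ε) ≤ F b ^ N⁻¹ := by
    rintro ε ⟨hε, hεb⟩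
    have hFε : ∀ t ∈ Icc ε b, F t = F ε + ∫ s in ε..t, f s := fun t ht => by
      rw [hF t, hF ε, ← integral_interval_sub_left (hfb t ⟨hε.le.trans ht.1, ht.2⟩)
        (hfb ε ⟨hε.le, hεb.le⟩)]
      ring
    have hgrowth := mul_sub_le_rpow_sub_rpow_of_ae_le hK (inv_pos.2 hN0) (inv_le_one_of_one_le₀ hN)
      hεb.le ((hfb ε ⟨hε.le, hεb.le⟩).symm.trans (hfb b ⟨hb.le, le_rfl⟩)) hFε
      (fun t ht => hFpos t (hε.trans_le ht.1) (hltR ht.2))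
      (by filter_upwards [hae] with s hs hsI
          rw [← hexp]
          exact hs (hε.trans_le hsI.1) (hltR hsI.2))
    linarith [Real.rpow_nonneg (hFpos ε hε (hltR hεb.le)).le N⁻¹]
  have hlim : K * N⁻¹ * b ≤ F b ^ N⁻¹ := by
    refine le_of_tendsto ?_ (eventually_of_mem (Ioo_mem_nhdsGT hb) hslope)
    exact ((by fun_prop : Continuous fun ε : ℝ => K * N⁻¹ * (b - ε)).tendsto' 0 _
      (by simp)).mono_left nhdsWithin_le_nhds
  refine (Real.le_rpow_inv_iff_of_pos (by positivity) (hFpos b hb hbR).le hN0).1 ?_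
  rwa [div_eq_mul_inv, mul_right_comm]

/-- Gronwall-type integral inequality behind the isoperimetric almost-regularity
theorem. -/
theorem stmt5 (N K : ℝ) (hN : 1 ≤ N) (hK : 0 ≤ K) (R : ℝ≥0∞) (hR : 0 < R)
    (f F : ℝ → ℝ) (hmeas : Measurable f)
    (hnonneg : ∀ s : ℝ, 0 < s → ENNReal.ofReal s < R → 0 ≤ f s)
    (hint : ∀ r : ℝ, 0 < r → ENNReal.ofReal r < R → IntegrableOn f (Set.Ioc 0 r))
    (hF : ∀ r : ℝ, F r = ∫ s in (0:ℝ)..r, f s)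
    (hFpos : ∀ r : ℝ, 0 < r → ENNReal.ofReal r < R → 0 < F r)
    (hae : ∀ᵐ r ∂(volume : Measure ℝ), 0 < r → ENNReal.ofReal r < R →
      K * F r ^ ((N - 1) / N) ≤ f r) :
    ∀ r : ℝ, 0 < r → ENNReal.ofReal r < R → (K * r / N) ^ N ≤ F r :=
  stmt5_general N K hN hK R f F hint hF hFpos hae
end

section
/- Let 0 < θ < 1 and let f : (0,∞) → (0,∞) be concave with lim_{v→∞} f(v)/v^θ = L for some L ∈ [0,∞). Then the right derivative f'₊ satisfies lim_{v→∞} v^{1−θ}·f'₊(v) = θ·L. In particular, with θ = (N−1)/N one gets lim_{v→∞} v^{1/N}·f'₊(v) = ((N−1)/N)·L. -/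
/-!
For `c > 0` write `F v = f v / v ^ θ`; then `f (c v) = c ^ θ F (c v) v ^ θ`, so the rescaled secant
slope `v ^ (1 - θ) · slope f v (c v)` equals `(c ^ θ F (c v) - F v) / (c - 1)` and tends to
`L · (c ^ θ - 1) / (c - 1)` as `v → ∞`. By concavity the right derivative at `v` lies above the
secant slope to `c v` for `c > 1` and below it for `c < 1`. Letting `c → 1`, the factor
`(c ^ θ - 1) / (c - 1)` tends to `θ`, which squeezes `v ^ (1 - θ) f'₊(v)` to `θ L`.
-/

open Filter Topology Set

namespace ConcaveOn

variable {S : Set ℝ} {f : ℝ → ℝ} {w x : ℝ}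

lemma differentiableWithinAt_Iio_of_mem_interior (hfc : ConcaveOn ℝ S f)
    (hx : x ∈ interior S) : DifferentiableWithinAt ℝ f (Iio x) x := by
  simpa using (hfc.neg.differentiableWithinAt_Iio_of_mem_interior hx).neg

lemma differentiableWithinAt_Ioi_of_mem_interior (hfc : ConcaveOn ℝ S f)
    (hx : x ∈ interior S) : DifferentiableWithinAt ℝ f (Ioi x) x := by
  simpa using (hfc.neg.differentiableWithinAt_Ioi_of_mem_interior hx).neg

lemma rightDeriv_le_leftDeriv_of_mem_interior (hfc : ConcaveOn ℝ S f) (hx : x ∈ interior S) :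
    derivWithin f (Ioi x) x ≤ derivWithin f (Iio x) x := by
  simpa [derivWithin.neg] using hfc.neg.leftDeriv_le_rightDeriv_of_mem_interior hx

lemma rightDeriv_le_slope_of_lt (hfc : ConcaveOn ℝ S f) (hw : w ∈ S) (hx : x ∈ interior S)
    (hwx : w < x) : derivWithin f (Ioi x) x ≤ slope f w x :=
  (hfc.rightDeriv_le_leftDeriv_of_mem_interior hx).trans <|
    hfc.leftDeriv_le_slope hw (interior_subset hx) hwx
      (hfc.differentiableWithinAt_Iio_of_mem_interior hx)

end ConcaveOn

lemma tendsto_slope_rpow_one (θ : ℝ) :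
    Tendsto (slope (fun x : ℝ ↦ x ^ θ) 1) (𝓝[≠] 1) (𝓝 θ) := by
  simpa using hasDerivAt_iff_tendsto_slope.1 (Real.hasDerivAt_rpow_const (x := 1) (p := θ)
    (Or.inl one_ne_zero))

lemma rpow_one_sub_mul_slope_mul {θ v c : ℝ} (f : ℝ → ℝ) (hv : 0 < v) (hc : 0 < c) :
    v ^ (1 - θ) * slope f v (c * v)
      = (c ^ θ * (f (c * v) / (c * v) ^ θ) - f v / v ^ θ) / (c - 1) := by
  rcases eq_or_ne c 1 with rfl | hc1
  · simp
  have hc1' : c - 1 ≠ 0 := sub_ne_zero.2 hc1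
  rw [slope_def_field, Real.rpow_sub hv, Real.rpow_one, Real.mul_rpow hc.le hv.le]
  field_simp

lemma tendsto_rpow_one_sub_mul_slope_mul {θ L c : ℝ} {f : ℝ → ℝ}
    (hlim : Tendsto (fun v ↦ f v / v ^ θ) atTop (𝓝 L)) (hc : 0 < c) :
    Tendsto (fun v ↦ v ^ (1 - θ) * slope f v (c * v)) atTop (𝓝 (L * slope (fun x : ℝ ↦ x ^ θ) 1 c)) := by
  have hscaled : Tendsto (fun v ↦ f (c * v) / (c * v) ^ θ) atTop (𝓝 L) :=
    hlim.comp (tendsto_id.const_mul_atTop hc)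
  have hquot := ((hscaled.const_mul (c ^ θ)).sub hlim).div_const (c - 1)
  rw [show (c ^ θ * L - L) / (c - 1 : ℝ) = L * slope (fun x : ℝ ↦ x ^ θ) 1 c by
    rw [slope_def_field, Real.one_rpow]; ring] at hquot
  refine hquot.congr' ?_
  filter_upwards [eventually_gt_atTop 0] with v hv
  exact (rpow_one_sub_mul_slope_mul f hv hc).symm

theorem stmt9_general (θ L : ℝ)
    (f : ℝ → ℝ)
    (hconc : ConcaveOn ℝ (Set.Ioi 0) f)
    (hlim : Tendsto (fun v : ℝ => f v / v ^ θ) atTop (nhds L)) :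
    Tendsto (fun v : ℝ => v ^ (1 - θ) * derivWithin f (Set.Ioi v) v) atTop
      (nhds (θ * L)) := by
  have hlimit : Tendsto (fun c ↦ L * slope (fun x : ℝ ↦ x ^ θ) 1 c) (𝓝[≠] 1) (𝓝 (θ * L)) := by
    simpa only [mul_comm L] using (tendsto_slope_rpow_one θ).const_mul L
  refine tendsto_order.2 ⟨fun a ha ↦ ?_, fun a ha ↦ ?_⟩
  · obtain ⟨c, hac, hc : (1 : ℝ) < c⟩ := (((hlimit.mono_left (nhdsGT_le_nhdsNE 1)).eventually
      (lt_mem_nhds ha)).and self_mem_nhdsWithin).exists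
    filter_upwards [(tendsto_rpow_one_sub_mul_slope_mul hlim (zero_lt_one.trans hc)).eventually
      (lt_mem_nhds hac), eventually_gt_atTop 0] with v hav hv
    refine hav.trans_le (mul_le_mul_of_nonneg_left ?_ (Real.rpow_nonneg hv.le _))
    exact hconc.slope_le_rightDeriv hv (mul_pos (zero_lt_one.trans hc) hv) (lt_mul_left hv hc)
      (hconc.differentiableWithinAt_Ioi_of_mem_interior (by rwa [interior_Ioi]))
  · obtain ⟨c, hca, hc⟩ := (((hlimit.mono_left (nhdsLT_le_nhdsNE 1)).eventually
      (gt_mem_nhds ha)).and (Ioo_mem_nhdsLT zero_lt_one)).exists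
    filter_upwards [(tendsto_rpow_one_sub_mul_slope_mul hlim hc.1).eventually
      (gt_mem_nhds hca), eventually_gt_atTop 0] with v hav hv
    refine lt_of_le_of_lt (mul_le_mul_of_nonneg_left ?_ (Real.rpow_nonneg hv.le _)) hav
    rw [slope_comm]
    exact hconc.rightDeriv_le_slope_of_lt (mul_pos hc.1 hv) (by rwa [interior_Ioi])
      (mul_lt_of_lt_one_left hv hc.2)

/-- Asymptotics of the right derivative of a positive concave function with
power-like growth `f(v) ~ L v^θ`. -/
theorem stmt9 (θ L : ℝ) (hθ0 : 0 < θ) (hθ1 : θ < 1) (hL : 0 ≤ L)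
    (f : ℝ → ℝ)
    (hpos : ∀ v ∈ Set.Ioi (0 : ℝ), 0 < f v)
    (hconc : ConcaveOn ℝ (Set.Ioi 0) f)
    (hlim : Tendsto (fun v : ℝ => f v / v ^ θ) atTop (nhds L)) :
    Tendsto (fun v : ℝ => v ^ (1 - θ) * derivWithin f (Set.Ioi v) v) atTop
      (nhds (θ * L)) :=
  stmt9_general θ L f hconc hlim
end
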